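/- Let 0 ≤ ε ≤ δ with ε ≤ 1/2, and let S ⊂ ℝ^d satisfy: ‖μ_S − μ‖ ≤ δ, v^T Σ̄_S v ≤ 1 + δ²/ε for all unit vectors v, and v^T Σ̄_{S'} v ≥ 1 − δ²/ε for all S' ⊆ S with |S'| ≥ (1−ε)|S| and all unit vectors v. Then for every subset S' ⊆ S with |S'| ≥ (1−ε)|S|: (1/|S|)∑_{i ∈ S∖S'} (v^T(x_i − μ))² ≤ 2δ²/ε + ε for all unit vectors v. -/

import Mathlib

open Finset

/-
Writing `N = |S|`, `M = |S'|` and `r = M / N`, the removed second moment is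
`(1/N) ∑_{S \ S'} ⟨v, xᵢ - μ⟩² = vᵀΣ̄_S v - r · vᵀΣ̄_{S'} v`. The upper bound on `S` and the lower
bound on `S'` give at most `(1 + δ²/ε) - r (1 - δ²/ε) = (1 - r) + (1 + r) δ²/ε`, and
`1 - ε ≤ r ≤ 1` turns this into `ε + 2δ²/ε`.
-/

noncomputable def sampleMean {d n : ℕ} (x : Fin n → EuclideanSpace ℝ (Fin d))
    (S : Finset (Fin n)) : EuclideanSpace ℝ (Fin d) :=
  (S.card : ℝ)⁻¹ • ∑ i ∈ S, x i

/-- `v ↦ vᵀ Σ̄_S v`, the quadratic form of the second moment matrix of `S` centered at `μ`. -/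
noncomputable def qForm {d n : ℕ} (x : Fin n → EuclideanSpace ℝ (Fin d))
    (S : Finset (Fin n)) (μ v : EuclideanSpace ℝ (Fin d)) : ℝ :=
  (S.card : ℝ)⁻¹ * ∑ i ∈ S, (inner ℝ v (x i - μ) : ℝ) ^ 2

/-- `S` is `(ε, δ)`-stable with respect to `μ` and `σ²`: for every `S' ⊆ S` with
`|S'| ≥ (1-ε)|S|`, the mean of `S'` is `σδ`-close to `μ` and the centered second moment
matrix is within `σ²δ²/ε` of `σ² I` in spectral norm (expressed via quadratic forms). -/
def IsStable {d n : ℕ} (x : Fin n → EuclideanSpace ℝ (Fin d)) (S : Finset (Fin n))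
    (μ : EuclideanSpace ℝ (Fin d)) (σ ε δ : ℝ) : Prop :=
  ∀ S' ⊆ S, (1 - ε) * (S.card : ℝ) ≤ (S'.card : ℝ) →
    ‖sampleMean x S' - μ‖ ≤ σ * δ ∧
    ∀ v : EuclideanSpace ℝ (Fin d), ‖v‖ = 1 →
      |qForm x S' μ v - σ ^ 2| ≤ σ ^ 2 * δ ^ 2 / ε

section QForm

variable {d n : ℕ} (x : Fin n → EuclideanSpace ℝ (Fin d)) (μ v : EuclideanSpace ℝ (Fin d))

theorem card_mul_qForm (S : Finset (Fin n)) :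
    (S.card : ℝ) * qForm x S μ v = ∑ i ∈ S, (inner ℝ v (x i - μ) : ℝ) ^ 2 := by
  rcases S.eq_empty_or_nonempty with rfl | hS
  · simp
  · rw [qForm, mul_inv_cancel_left₀ (by exact_mod_cast hS.card_pos.ne')]

theorem inv_card_mul_sum_sdiff_eq {S T : Finset (Fin n)} (hT : T ⊆ S) :
    (S.card : ℝ)⁻¹ * ∑ i ∈ S \ T, (inner ℝ v (x i - μ) : ℝ) ^ 2 =
      qForm x S μ v - (T.card / S.card : ℝ) * qForm x T μ v := by
  rw [sum_sdiff_eq_sub hT, qForm, ← card_mul_qForm x μ v T]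
  ring

end QForm

theorem stmt18_general {d n : ℕ} (x : Fin n → EuclideanSpace ℝ (Fin d)) (S : Finset (Fin n))
    (μ : EuclideanSpace ℝ (Fin d)) (ε δ : ℝ)
    (hε0 : 0 ≤ ε)
    (hub : ∀ v : EuclideanSpace ℝ (Fin d), ‖v‖ = 1 → qForm x S μ v ≤ 1 + δ ^ 2 / ε)
    (hlb : ∀ S' ⊆ S, (1 - ε) * (S.card : ℝ) ≤ (S'.card : ℝ) →
      ∀ v : EuclideanSpace ℝ (Fin d), ‖v‖ = 1 → 1 - δ ^ 2 / ε ≤ qForm x S' μ v) :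
    ∀ S' ⊆ S, (1 - ε) * (S.card : ℝ) ≤ (S'.card : ℝ) →
      ∀ v : EuclideanSpace ℝ (Fin d), ‖v‖ = 1 →
        (S.card : ℝ)⁻¹ * ∑ i ∈ S \ S', (inner ℝ v (x i - μ) : ℝ) ^ 2 ≤ 2 * δ ^ 2 / ε + ε := by
  intro S' hS' hcard v hv
  have hq : 0 ≤ δ ^ 2 / ε := by positivity
  rcases S.eq_empty_or_nonempty with rfl | hS
  · simpa using by positivity
  have hN : (0 : ℝ) < S.card := by exact_mod_cast hS.card_pos
  set r : ℝ := S'.card / S.card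
  have hr_lower : 1 - ε ≤ r := (le_div_iff₀ hN).2 hcard
  have hr_upper : r ≤ 1 := div_le_one_of_le₀ (by exact_mod_cast card_le_card hS') hN.le
  rw [inv_card_mul_sum_sdiff_eq x μ v hS']
  calc qForm x S μ v - r * qForm x S' μ v
      ≤ (1 + δ ^ 2 / ε) - r * (1 - δ ^ 2 / ε) :=
        sub_le_sub (hub v hv) (mul_le_mul_of_nonneg_left (hlb S' hS' hcard v hv) (by positivity))
    _ = (1 - r) + (1 + r) * (δ ^ 2 / ε) := by ring
    _ ≤ ε + 2 * (δ ^ 2 / ε) := add_le_add (by linarith) (by nlinarith)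
    _ = 2 * δ ^ 2 / ε + ε := by ring

theorem stmt18 {d n : ℕ} (x : Fin n → EuclideanSpace ℝ (Fin d)) (S : Finset (Fin n))
    (μ : EuclideanSpace ℝ (Fin d)) (ε δ : ℝ)
    (hε0 : 0 ≤ ε) (hεδ : ε ≤ δ) (hε : ε ≤ 1/2)
    (hmean : ‖sampleMean x S - μ‖ ≤ δ)
    (hub : ∀ v : EuclideanSpace ℝ (Fin d), ‖v‖ = 1 → qForm x S μ v ≤ 1 + δ ^ 2 / ε)
    (hlb : ∀ S' ⊆ S, (1 - ε) * (S.card : ℝ) ≤ (S'.card : ℝ) →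
      ∀ v : EuclideanSpace ℝ (Fin d), ‖v‖ = 1 → 1 - δ ^ 2 / ε ≤ qForm x S' μ v) :
    ∀ S' ⊆ S, (1 - ε) * (S.card : ℝ) ≤ (S'.card : ℝ) →
      ∀ v : EuclideanSpace ℝ (Fin d), ‖v‖ = 1 →
        (S.card : ℝ)⁻¹ * ∑ i ∈ S \ S', (inner ℝ v (x i - μ) : ℝ) ^ 2 ≤ 2 * δ ^ 2 / ε + ε :=
  stmt18_general x S μ ε δ hε0 hub hlb
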